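/- Let Φ be an m×n complex matrix and let S be a natural number. Then every nonzero vector w ∈ ℂ^n with Φw = 0 satisfies ‖w‖₀ > 2S (i.e., Spark(Φ) > 2S) if and only if S-sparse representations under Φ are unique, i.e., for all w₁, w₂ ∈ ℂ^n with Φw₁ = Φw₂, ‖w₁‖₀ ≤ S and ‖w₂‖₀ ≤ S, one has w₁ = w₂. -/

import Mathlib

/-!
A nonzero kernel vector with at most `2S` nonzero entries splits as `w₁ - w₂` with two `S`-sparse
vectors having the same image, and conversely the difference of two distinct `S`-sparse vectors
with the same image is a nonzero kernel vector with at most `2S` nonzero entries.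
-/

/-- The ℓ₀-"norm" of a vector: the number of nonzero entries. -/
noncomputable def l0norm {n : ℕ} (w : Fin n → ℂ) : ℕ :=
  Nat.card (Function.support w)

open Function Set

section Sparsity

variable {ι G : Type*} [Finite ι]

theorem ncard_support_sub_le [AddGroup G] (f g : ι → G) :
    (support (f - g)).ncard ≤ (support f).ncard + (support g).ncard :=
  (ncard_le_ncard (support_sub f g)).trans (ncard_union_le _ _)

theorem exists_add_eq_of_ncard_support_le [AddZeroClass G] {f : ι → G} {a b : ℕ}
    (hf : (support f).ncard ≤ a + b) :
    ∃ u v : ι → G, u + v = f ∧ (support u).ncard ≤ a ∧ (support v).ncard ≤ b := by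
  obtain ⟨B, hB, hBcard⟩ := exists_subset_card_eq (min_le_right a (support f).ncard)
  refine ⟨B.indicator f, Bᶜ.indicator f, indicator_self_add_compl B f, ?_, ?_⟩
  · rw [support_indicator, inter_eq_left.mpr hB, hBcard]
    exact min_le_left _ _
  · rw [support_indicator, ← sdiff_eq_compl_inter, ncard_sdiff hB, hBcard]
    omega

theorem two_mul_lt_ncard_support_ker_iff_sparse_unique [AddGroup G] {H : Type*} [AddGroup H]
    (φ : (ι → G) →+ H) (S : ℕ) :
    (∀ w : ι → G, w ≠ 0 → φ w = 0 → 2 * S < (support w).ncard) ↔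
    (∀ w₁ w₂ : ι → G, φ w₁ = φ w₂ →
      (support w₁).ncard ≤ S → (support w₂).ncard ≤ S → w₁ = w₂) := by
  constructor
  · intro hspark w₁ w₂ heq h₁ h₂
    by_contra hne
    have hker : φ (w₁ - w₂) = 0 := by rw [map_sub, heq, sub_self]
    have := hspark _ (sub_ne_zero.mpr hne) hker
    have := ncard_support_sub_le w₁ w₂
    omega
  · intro huniq w hw hker
    by_contra! hsparse
    obtain ⟨u, v, rfl, hu, hv⟩ :=
      exists_add_eq_of_ncard_support_le (f := w) (a := S) (b := S) (by omega)
    have heq : φ u = φ (-v) := by rw [map_neg, eq_neg_iff_add_eq_zero, ← map_add, hker]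
    have := huniq u (-v) heq hu (by rwa [support_neg])
    exact hw (by rw [this, neg_add_cancel])

end Sparsity

/-- Spark(Φ) > 2S (every nonzero kernel vector has more than 2S nonzero entries)
iff S-sparse representations under Φ are unique. -/
theorem spark_gt_two_s_iff_sparse_unique {m n : ℕ}
    (Φ : Matrix (Fin m) (Fin n) ℂ) (S : ℕ) :
    (∀ w : Fin n → ℂ, w ≠ 0 → Φ.mulVec w = 0 → 2 * S < l0norm w) ↔
    (∀ w₁ w₂ : Fin n → ℂ, Φ.mulVec w₁ = Φ.mulVec w₂ →
      l0norm w₁ ≤ S → l0norm w₂ ≤ S → w₁ = w₂) :=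
  -- `l0norm w` and `(support w).ncard` are both `Nat.card (support w)` definitionally.
  two_mul_lt_ncard_support_ker_iff_sparse_unique Φ.mulVecLin.toAddMonoidHom S
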